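/- arXiv:1410.8807 — 3 statements merged into one kernel-verified Lean document; each statement's English description precedes it below -/
import Mathlib

section
/- Let u and v be two vertices of a graph G at distance at least 4, and let G' be obtained from G by deleting u and v and adding a new vertex w adjacent to all of N(u) ∪ N(v) (vertex sticking). Then the triangle graphs T(G) and T(G') are isomorphic. -/
open SimpleGraph

/-- A triangle in a graph: a 3-element vertex set, pairwise adjacent. -/
def IsTriangle {V : Type*} (G : SimpleGraph V) (t : Finset V) : Prop :=
  t.card = 3 ∧ ∀ u ∈ t, ∀ v ∈ t, u ≠ v → G.Adj u v

/-- The triangle graph: vertices are the triangles of `G`, two triangles are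
adjacent iff they share an edge (equivalently, share exactly two vertices). -/
def triangleGraph {V : Type*} [DecidableEq V] (G : SimpleGraph V) :
    SimpleGraph {t : Finset V // IsTriangle G t} where
  Adj s t := s ≠ t ∧ ((s : Finset V) ∩ (t : Finset V)).card = 2
  symm := ⟨by
    intro s t h
    exact ⟨h.1.symm, by rw [Finset.inter_comm]; exact h.2⟩⟩
  loopless := ⟨fun s h => h.1 rfl⟩

/-- `K₅` minus the edges of a triangle (on vertices 0,1,2). -/
def K5mK3 : SimpleGraph (Fin 5) where
  Adj u v := u ≠ v ∧ ¬(u.val < 3 ∧ v.val < 3)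
  symm := ⟨by
    intro u v h
    exact ⟨h.1.symm, fun hc => h.2 ⟨hc.2, hc.1⟩⟩⟩
  loopless := ⟨fun u h => h.1 rfl⟩

/-- The wheel `Wₙ = K₁ ∨ Cₙ`; the hub is `none`. -/
def wheel (n : ℕ) : SimpleGraph (Option (Fin n)) :=
  SimpleGraph.fromRel (fun u v =>
    u = none ∨ ∃ a b, u = some a ∧ v = some b ∧ (cycleGraph n).Adj a b)

/-- The square of a graph: join vertices at distance at most 2. -/
def squareGraph {V : Type*} (G : SimpleGraph V) : SimpleGraph V where
  Adj u v := u ≠ v ∧ (G.Adj u v ∨ ∃ w, G.Adj u w ∧ G.Adj w v)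
  symm := ⟨by
    intro u v h
    refine ⟨h.1.symm, ?_⟩
    rcases h.2 with h' | ⟨w, h1, h2⟩
    · exact Or.inl h'.symm
    · exact Or.inr ⟨w, h2.symm, h1.symm⟩⟩
  loopless := ⟨fun u h => h.1 rfl⟩

/-- The number of triangles of `G` containing both `u` and `v`. -/
noncomputable def triCount {V : Type*} (G : SimpleGraph V) (u v : V) : ℕ :=
  {t : Finset V | IsTriangle G t ∧ u ∈ t ∧ v ∈ t}.ncard

/-- `G` contains a (not necessarily induced) subgraph isomorphic to `H`. -/
def HasSubgraphIso {α V : Type*} (H : SimpleGraph α) (G : SimpleGraph V) : Prop :=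
  ∃ f : H →g G, Function.Injective f

/-- The graph obtained from `G` by sticking the vertices `u` and `v`: the vertex `u`
plays the role of the new vertex `w`, adjacent to all of `N(u) ∪ N(v)`, while `v`
becomes isolated. -/
def stickGraph {V : Type*} [DecidableEq V] (G : SimpleGraph V) (u v : V) : SimpleGraph V :=
  SimpleGraph.fromRel (fun a b =>
    a ≠ v ∧ b ≠ v ∧
      ((a = u ∧ (G.Adj u b ∨ G.Adj v b)) ∨ (a ≠ u ∧ b ≠ u ∧ G.Adj a b)))

/-! Let `φ = stickMap u v` send `v` to `u` and fix every other vertex. As `u` and `v` are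
distinct and non-adjacent, `φ` is a homomorphism from `G` to the stuck graph, so it maps
triangles to triangles. Conversely a triangle of the stuck graph avoids the isolated vertex `v`;
it is a triangle of `G` unless it meets `N(v)`, and then, as there is no walk `u - b - c - v`,
its vertices other than `u` all lie in `N(v)`, so swapping `u` and `v` gives a preimage.
Finally `φ` is injective on `s ∪ t` unless, say, `v ∈ s` and `u ∈ t`; then `s` and `t` are
disjoint (`u` and `v` have no common neighbour) and `φ s`, `φ t` share only `u`. Either way
`φ s` and `φ t` share two vertices iff `s` and `t` do. -/

open Finset

theorem isTriangle_iff_isNClique {V : Type*} {G : SimpleGraph V} {t : Finset V} :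
    IsTriangle G t ↔ G.IsNClique 3 t :=
  ⟨fun h => ⟨fun _ hx _ hy => h.2 _ hx _ hy, h.1⟩,
    fun h => ⟨h.2, fun _ hx _ hy => h.1 hx hy⟩⟩

theorem SimpleGraph.IsNClique.image_hom {V W : Type*} [DecidableEq W] {G : SimpleGraph V}
    {H : SimpleGraph W} (f : G →g H) {n : ℕ} {s : Finset V} (hs : G.IsNClique n s) :
    H.IsNClique n (s.image f) := by
  have hinj : Set.InjOn f s := fun a ha b hb hab => by
    by_contra hne
    exact (f.map_adj (hs.1 ha hb hne)).ne hab
  refine ⟨?_, by rw [card_image_of_injOn hinj, hs.2]⟩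
  rw [coe_image, isClique_iff, hinj.pairwise_image]
  exact fun a ha b hb hne => f.map_adj (hs.1 ha hb hne)

section Distance

variable {V : Type*} {G : SimpleGraph V} {u v : V}

theorem ne_of_forall_walk_length_ge (hdist : ∀ p : G.Walk u v, 4 ≤ p.length) : u ≠ v := by
  rintro rfl
  simpa using hdist .nil

theorem not_adj_of_forall_walk_length_ge (hdist : ∀ p : G.Walk u v, 4 ≤ p.length) :
    ¬ G.Adj u v := fun h => by
  simpa using hdist (.cons h .nil)

theorem not_adj_of_adj_of_forall_walk_length_ge (hdist : ∀ p : G.Walk u v, 4 ≤ p.length)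
    {a : V} (hua : G.Adj u a) : ¬ G.Adj v a := fun hva => by
  simpa using hdist (.cons hua (.cons hva.symm .nil))

theorem not_adj_of_adj_adj_of_forall_walk_length_ge (hdist : ∀ p : G.Walk u v, 4 ≤ p.length)
    {a b : V} (hua : G.Adj u a) (hab : G.Adj a b) : ¬ G.Adj v b := fun hvb => by
  simpa using hdist (.cons hua (.cons hab (.cons hvb.symm .nil)))

theorem disjoint_of_isClique_of_mem (hdist : ∀ p : G.Walk u v, 4 ≤ p.length) {s t : Set V}
    (hs : G.IsClique s) (ht : G.IsClique t) (hvs : v ∈ s) (hut : u ∈ t) : Disjoint s t := by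
  have huv := ne_of_forall_walk_length_ge hdist
  have hadj := not_adj_of_forall_walk_length_ge hdist
  refine Set.disjoint_left.2 fun x hxs hxt => ?_
  rcases eq_or_ne x v with rfl | hxv
  · exact hadj (ht hut hxt huv)
  rcases eq_or_ne x u with rfl | hxu
  · exact hadj (hs hxs hvs huv)
  exact not_adj_of_adj_of_forall_walk_length_ge hdist (ht hut hxt hxu.symm) (hs hvs hxs hxv.symm)

end Distance

section Sticking

variable {V : Type*} [DecidableEq V] {G : SimpleGraph V} {u v : V}

def stickMap (u v : V) (x : V) : V := if x = v then u else x

theorem stickMap_of_ne {x : V} (h : x ≠ v) : stickMap u v x = x := if_neg h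

theorem stickMap_swap (x : V) : stickMap u v (Equiv.swap u v x) = stickMap u v x := by
  unfold stickMap; rcases eq_or_ne x u with rfl | hu <;> rcases eq_or_ne x v with rfl | hv <;>
    simp_all [Equiv.swap_apply_of_ne_of_ne]

theorem image_stickMap_of_notMem {t : Finset V} (h : v ∉ t) : t.image (stickMap u v) = t := by
  conv_rhs => rw [← image_id (s := t)]
  exact image_congr fun x hx => stickMap_of_ne (ne_of_mem_of_not_mem hx h)

theorem stickMap_injOn {S : Set V} (h : u ∉ S ∨ v ∉ S) : S.InjOn (stickMap u v) := by
  intro a ha b hb hab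
  unfold stickMap at hab
  split_ifs at hab <;> grind

theorem image_stickMap_inter_subset (s t : Finset V) :
    s.image (stickMap u v) ∩ t.image (stickMap u v) ⊆
      insert u ((s ∩ t).image (stickMap u v)) := by
  intro x hx
  simp only [mem_inter, mem_image] at hx
  obtain ⟨⟨a, ha, rfl⟩, ⟨b, hb, hab⟩⟩ := hx
  unfold stickMap at hab ⊢
  simp only [mem_insert, mem_image, mem_inter]
  split_ifs at hab ⊢ <;> grind

theorem stickGraph_adj {a b : V} :
    (stickGraph G u v).Adj a b ↔ a ≠ b ∧ a ≠ v ∧ b ≠ v ∧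
      ((a = u ∧ (G.Adj u b ∨ G.Adj v b)) ∨ (b = u ∧ (G.Adj u a ∨ G.Adj v a)) ∨
        (a ≠ u ∧ b ≠ u ∧ G.Adj a b)) := by
  simp only [stickGraph, fromRel_adj]
  grind [SimpleGraph.adj_comm]

theorem not_stickGraph_adj_left (x : V) : ¬ (stickGraph G u v).Adj v x := by
  simp [stickGraph_adj]

theorem SimpleGraph.Adj.of_stickGraph {a b : V} (h : (stickGraph G u v).Adj a b) (ha : a ≠ u)
    (hb : b ≠ u) : G.Adj a b := by
  grind [stickGraph_adj]

theorem adj_or_adj_of_stickGraph_adj {b : V} (h : (stickGraph G u v).Adj u b) :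
    G.Adj u b ∨ G.Adj v b := by
  grind [stickGraph_adj]

def stickHom (huv : u ≠ v) (hadj : ¬ G.Adj u v) : G →g stickGraph G u v where
  toFun := stickMap u v
  map_rel' {a b} h := by
    unfold stickMap
    rw [stickGraph_adj]
    have := h.ne
    split_ifs <;> grind [SimpleGraph.adj_comm]

theorem isNClique_image_stickMap (huv : u ≠ v) (hadj : ¬ G.Adj u v) {n : ℕ} {s : Finset V}
    (hs : G.IsNClique n s) : (stickGraph G u v).IsNClique n (s.image (stickMap u v)) :=
  hs.image_hom (stickHom huv hadj)

theorem notMem_of_stickGraph_isNClique {n : ℕ} (hn : 2 ≤ n) {t : Finset V}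
    (ht : (stickGraph G u v).IsNClique n t) : v ∉ t := fun hv => by
  obtain ⟨x, hx, hxv⟩ := exists_mem_ne (by rw [ht.2]; omega) v
  exact not_stickGraph_adj_left x (ht.1 hv hx hxv.symm)

theorem isClique_of_stickGraph {t : Set V} (ht : (stickGraph G u v).IsClique t)
    (hv : ∀ c ∈ t, ¬ G.Adj v c) : G.IsClique t := by
  intro a ha b hb hne
  have hab := ht ha hb hne
  rcases eq_or_ne a u with rfl | hau
  · exact (adj_or_adj_of_stickGraph_adj hab).resolve_right (hv b hb)
  rcases eq_or_ne b u with rfl | hbu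
  · exact ((adj_or_adj_of_stickGraph_adj hab.symm).resolve_right (hv a ha)).symm
  exact hab.of_stickGraph hau hbu

theorem isClique_image_swap_of_stickGraph (hdist : ∀ p : G.Walk u v, 4 ≤ p.length)
    {t : Finset V} (ht : (stickGraph G u v).IsClique t) {c : V} (hct : c ∈ t)
    (hvc : G.Adj v c) : G.IsClique (t.image (Equiv.swap u v) : Set V) := by
  have hcu : c ≠ u := by
    rintro rfl
    exact not_adj_of_forall_walk_length_ge hdist hvc.symm
  -- a `G`-neighbour of `u` in `t` would give a walk `u - b - c - v`
  have hvb : ∀ b ∈ t, (stickGraph G u v).Adj u b → G.Adj v b := by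
    intro b hbt hub
    refine (adj_or_adj_of_stickGraph_adj hub).resolve_left fun hub' => ?_
    rcases eq_or_ne b c with rfl | hbc
    · exact not_adj_of_adj_of_forall_walk_length_ge hdist hub' hvc
    · exact not_adj_of_adj_adj_of_forall_walk_length_ge hdist hub'
        ((ht hbt hct hbc).of_stickGraph hub.ne.symm hcu) hvc
  rw [coe_image, isClique_iff, (Equiv.injective _).injOn.pairwise_image]
  intro a ha b hb hne
  simp only [Function.onFun]
  have hab := ht ha hb hne
  have hav : a ≠ v := fun h => not_stickGraph_adj_left b (h ▸ hab)
  have hbv : b ≠ v := fun h => not_stickGraph_adj_left a (h ▸ hab.symm)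
  rcases eq_or_ne a u with rfl | hau
  · rw [Equiv.swap_apply_left, Equiv.swap_apply_of_ne_of_ne hne.symm hbv]
    exact hvb b hb hab
  rcases eq_or_ne b u with rfl | hbu
  · rw [Equiv.swap_apply_left, Equiv.swap_apply_of_ne_of_ne hne hav]
    exact (hvb a ha hab.symm).symm
  rw [Equiv.swap_apply_of_ne_of_ne hau hav, Equiv.swap_apply_of_ne_of_ne hbu hbv]
  exact hab.of_stickGraph hau hbu

theorem exists_isNClique_image_stickMap_eq (hdist : ∀ p : G.Walk u v, 4 ≤ p.length) {n : ℕ}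
    (hn : 2 ≤ n) {t : Finset V} (ht : (stickGraph G u v).IsNClique n t) :
    ∃ s, G.IsNClique n s ∧ s.image (stickMap u v) = t := by
  have hvt := notMem_of_stickGraph_isNClique hn ht
  by_cases hv : ∃ c ∈ t, G.Adj v c
  · obtain ⟨c, hct, hvc⟩ := hv
    refine ⟨t.image (Equiv.swap u v), ⟨isClique_image_swap_of_stickGraph hdist ht.1 hct hvc,
      by rw [card_image_of_injective _ (Equiv.injective _), ht.2]⟩, ?_⟩
    rw [image_image, show stickMap u v ∘ Equiv.swap u v = stickMap u v from funext stickMap_swap,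
      image_stickMap_of_notMem hvt]
  · push Not at hv
    exact ⟨t, ⟨isClique_of_stickGraph ht.1 hv, ht.2⟩, image_stickMap_of_notMem hvt⟩

theorem card_image_stickMap_inter_le_one (hdist : ∀ p : G.Walk u v, 4 ≤ p.length)
    {s t : Finset V} (hs : G.IsClique (s : Set V)) (ht : G.IsClique (t : Set V)) (hvs : v ∈ s)
    (hut : u ∈ t) :
    #(s.image (stickMap u v) ∩ t.image (stickMap u v)) ≤ 1 ∧ #(s ∩ t) ≤ 1 := by
  have hst : s ∩ t = ∅ := disjoint_iff_inter_eq_empty.1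
    (disjoint_coe.1 (disjoint_of_isClique_of_mem hdist hs ht hvs hut))
  have hsub := image_stickMap_inter_subset (u := u) (v := v) s t
  rw [hst, image_empty, insert_empty] at hsub
  exact ⟨(card_le_card hsub).trans (card_singleton u).le, by simp [hst]⟩

theorem card_image_stickMap_inter (hdist : ∀ p : G.Walk u v, 4 ≤ p.length) {n : ℕ}
    {s t : Finset V} (hs : G.IsNClique n s) (ht : G.IsNClique n t) :
    #(s.image (stickMap u v) ∩ t.image (stickMap u v)) = #(s ∩ t) ∨
      #(s.image (stickMap u v) ∩ t.image (stickMap u v)) ≤ 1 ∧ #(s ∩ t) ≤ 1 := by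
  have huv := ne_of_forall_walk_length_ge hdist
  have hadj := not_adj_of_forall_walk_length_ge hdist
  by_cases huv_mem : u ∉ (↑s ∪ ↑t : Set V) ∨ v ∉ (↑s ∪ ↑t : Set V)
  · have hinj := stickMap_injOn huv_mem
    left
    have hsub : (↑(s ∩ t) : Set V) ⊆ ↑s ∪ ↑t := by
      push_cast
      exact Set.inter_subset_left.trans Set.subset_union_left
    rw [← image_inter_of_injOn _ _ hinj, card_image_of_injOn (hinj.mono hsub)]
  right
  have hboth : ∀ r : Finset V, G.IsNClique n r → u ∈ r → v ∉ r := fun r hr hu hv =>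
    hadj (hr.1 hu hv huv)
  push Not at huv_mem
  simp only [Set.mem_union, mem_coe] at huv_mem
  obtain ⟨hu | hu, hv | hv⟩ := huv_mem
  · exact absurd hv (hboth s hs hu)
  · rw [inter_comm, inter_comm s]
    exact card_image_stickMap_inter_le_one hdist ht.1 hs.1 hv hu
  · exact card_image_stickMap_inter_le_one hdist hs.1 ht.1 hv hu
  · exact absurd hv (hboth t ht hu)

theorem card_image_stickMap_inter_eq_two_iff (hdist : ∀ p : G.Walk u v, 4 ≤ p.length) {n : ℕ}
    {s t : Finset V} (hs : G.IsNClique n s) (ht : G.IsNClique n t) :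
    #(s.image (stickMap u v) ∩ t.image (stickMap u v)) = 2 ↔ #(s ∩ t) = 2 := by
  rcases card_image_stickMap_inter hdist hs ht with h | h <;> omega

theorem eq_of_image_stickMap_eq (hdist : ∀ p : G.Walk u v, 4 ≤ p.length) {n : ℕ}
    (hn : 2 ≤ n) {s t : Finset V} (hs : G.IsNClique n s) (ht : G.IsNClique n t)
    (hst : s.image (stickMap u v) = t.image (stickMap u v)) : s = t := by
  have hcard : #(s.image (stickMap u v)) = n :=
    (isNClique_image_stickMap (ne_of_forall_walk_length_ge hdist)
      (not_adj_of_forall_walk_length_ge hdist) hs).2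
  have hinter : n ≤ #(s ∩ t) := by
    rcases card_image_stickMap_inter hdist hs ht with h | h <;> rw [← hst, inter_self] at h <;>
      omega
  exact (eq_of_subset_of_card_le inter_subset_left (hs.2 ▸ hinter)).symm.trans
    (eq_of_subset_of_card_le inter_subset_right (ht.2 ▸ hinter))

end Sticking

theorem triangleGraph_iso_of_vertexSticking_general {V : Type*} [DecidableEq V]
    (G : SimpleGraph V) (u v : V)
    (hdist : ∀ p : G.Walk u v, 4 ≤ p.length) :
    Nonempty (triangleGraph G ≃g triangleGraph (stickGraph G u v)) := by
  have hclique {H : SimpleGraph V} (t : {t // IsTriangle H t}) : H.IsNClique 3 t :=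
    isTriangle_iff_isNClique.1 t.2
  let f (t : {t // IsTriangle G t}) : {t // IsTriangle (stickGraph G u v) t} :=
    ⟨t.1.image (stickMap u v), isTriangle_iff_isNClique.2 <| isNClique_image_stickMap
      (ne_of_forall_walk_length_ge hdist) (not_adj_of_forall_walk_length_ge hdist) (hclique t)⟩
  have hinj : Function.Injective f := fun s t hst => Subtype.ext <| eq_of_image_stickMap_eq
    hdist (by norm_num) (hclique s) (hclique t) (congrArg Subtype.val hst)
  have hsurj : Function.Surjective f := fun t => by
    obtain ⟨s, hs, hst⟩ := exists_isNClique_image_stickMap_eq hdist (by norm_num) (hclique t)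
    exact ⟨⟨s, isTriangle_iff_isNClique.2 hs⟩, Subtype.ext hst⟩
  have hbij : Function.Bijective f := ⟨hinj, hsurj⟩
  refine ⟨⟨Equiv.ofBijective f hbij, fun {s t} => ?_⟩⟩
  simp only [triangleGraph, Equiv.ofBijective_apply, ne_eq, hinj.eq_iff]
  rw [card_image_stickMap_inter_eq_two_iff hdist (hclique s) (hclique t)]

/-- Vertex sticking: if `u` and `v` are at distance at least 4 (every walk from `u`
to `v` has length at least 4), then the triangle graphs of `G` and of the stuck
graph are isomorphic. -/
theorem triangleGraph_iso_of_vertexSticking {V : Type*} [Fintype V] [DecidableEq V]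
    (G : SimpleGraph V) (u v : V)
    (hdist : ∀ p : G.Walk u v, 4 ≤ p.length) :
    Nonempty (triangleGraph G ≃g triangleGraph (stickGraph G u v)) :=
  triangleGraph_iso_of_vertexSticking_general G u v hdist
end

section
/- Let n ≥ 3 and let G be a graph, not isomorphic to K_5 minus a triangle, that is minimal (under taking subgraphs) with the property that T(G) contains an induced cycle of length n. Then, fixing such an induced n-cycle, no edge of G is contained in more than two of the n cycle-triangles, G has exactly 2n edges, of which exactly n lie in exactly one cycle-triangle and exactly n lie in exactly two cycle-triangles. -/
open SimpleGraph

/-- `G` is a minimal forbidden graph for `Cₙ`: its triangle graph contains an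
induced `n`-cycle, but the triangle graph of no proper subgraph of `G` does. -/
def MinimalForbiddenFor {V : Type*} [DecidableEq V] (G : SimpleGraph V) (n : ℕ) : Prop :=
  Nonempty (cycleGraph n ↪g triangleGraph G) ∧
    ∀ H : G.Subgraph, H ≠ ⊤ → IsEmpty (cycleGraph n ↪g triangleGraph H.coe)


/-!
By minimality `G` is the union of the cycle-triangles `T₁, …, Tₙ`: otherwise that union is a
proper subgraph whose triangle graph still contains the induced cycle. Cycle-triangles sharing an
edge are adjacent in `T(G)`, so an edge lying in three of them yields a triangle in `Cₙ`; then
`n = 3`, and `G`, being three triangles on a common edge, is `K₅ - K₃`. So every edge `e` lies in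
`mₑ ∈ {1, 2}` cycle-triangles. Double counting edge–triangle incidences gives `∑ mₑ = 3n`, and
double counting ordered pairs of cycle-triangles through a common edge gives `∑ mₑ (mₑ - 1) = 2n`,
since such pairs are exactly the `2n` ordered adjacent pairs of `Cₙ`, each sharing one edge.
-/

open Finset

section Triangles

variable {V : Type*} {G : SimpleGraph V}

theorem IsTriangle.isClique {t : Finset V} (ht : IsTriangle G t) : G.IsClique (t : Set V) :=
  fun u hu v hv huv => ht.2 u hu v hv huv

theorem IsTriangle.card_inter_le_two [DecidableEq V] {s t : Finset V} (hs : IsTriangle G s)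
    (ht : IsTriangle G t) (hst : s ≠ t) : #(s ∩ t) ≤ 2 := by
  by_contra! h
  have hs' : s ∩ t = s := eq_of_subset_of_card_le inter_subset_left (by rw [hs.1]; omega)
  have ht' : s ∩ t = t := eq_of_subset_of_card_le inter_subset_right (by rw [ht.1]; omega)
  exact hst (hs'.symm.trans ht')

theorem triangleGraph_adj_of_mem_sym2 [DecidableEq V] {s t : {t : Finset V // IsTriangle G t}}
    {e : Sym2 V} (hst : s ≠ t) (he : ¬e.IsDiag) (hs : e ∈ s.1.sym2) (ht : e ∈ t.1.sym2) :
    (triangleGraph G).Adj s t := by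
  refine ⟨hst, le_antisymm (s.2.card_inter_le_two t.2 (Subtype.coe_injective.ne hst)) ?_⟩
  induction e using Sym2.ind with
  | _ u v =>
    rw [mk_mem_sym2_iff] at hs ht
    calc 2 = #{u, v} := (card_pair he).symm
      _ ≤ #(s.1 ∩ t.1) := card_le_card (by simp [insert_subset_iff, *])

theorem SimpleGraph.IsClique.card_filter_edgeFinset_mem_sym2 [Fintype V] [DecidableEq V]
    [DecidableRel G.Adj] {c : Finset V} (hc : G.IsClique (c : Set V)) :
    #{e ∈ G.edgeFinset | e ∈ c.sym2} = (#c).choose 2 := by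
  rw [← Sym2.card_image_offDiag]
  congr 1
  ext e
  induction e using Sym2.ind with
  | _ u v =>
    simp only [mem_filter, mem_edgeFinset, mem_edgeSet, mk_mem_sym2_iff, mem_image, mem_offDiag,
      Prod.exists, Function.uncurry_apply_pair, Sym2.eq_iff]
    constructor
    · rintro ⟨huv, hu, hv⟩
      exact ⟨u, v, ⟨hu, hv, huv.ne⟩, Or.inl ⟨rfl, rfl⟩⟩
    · rintro ⟨x, y, ⟨hx, hy, hxy⟩, ⟨rfl, rfl⟩ | ⟨rfl, rfl⟩⟩
      exacts [⟨hc hx hy hxy, hx, hy⟩, ⟨hc hy hx hxy.symm, hy, hx⟩]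

theorem IsTriangle.card_filter_edgeFinset_mem_sym2 [Fintype V] [DecidableEq V]
    [DecidableRel G.Adj] {t : Finset V} (ht : IsTriangle G t) :
    #{e ∈ G.edgeFinset | e ∈ t.sym2} = 3 := by
  rw [ht.isClique.card_filter_edgeFinset_mem_sym2, ht.1]
  rfl

end Triangles

theorem cycleGraph_eq_three_of_adj {n : ℕ} {i j k : Fin n} (hij : (cycleGraph n).Adj i j)
    (hjk : (cycleGraph n).Adj j k) (hik : (cycleGraph n).Adj i k) : n = 3 := by
  have hsub (a b : Fin n) : (a - b).val = a.val - b.val ∧ b.val ≤ a.val ∨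
      (a - b).val = n + a.val - b.val ∧ a.val < b.val :=
    (le_or_gt b a).imp (fun h => ⟨Fin.sub_val_of_le h, h⟩) (fun h => ⟨Fin.coe_sub_iff_lt.2 h, h⟩)
  rw [cycleGraph_adj'] at hij hjk hik
  have := hsub i j; have := hsub j i; have := hsub j k; have := hsub k j
  have := hsub i k; have := hsub k i
  have := i.isLt; have := j.isLt; have := k.isLt
  omega

section Minimality

variable {V : Type*} [DecidableEq V] {G : SimpleGraph V}

theorem nonempty_embedding_triangleGraph_coe {α : Type*} {K : SimpleGraph α} (H : G.Subgraph)
    (f : K ↪g triangleGraph G) (hverts : ∀ a, ((f a).1 : Set V) ⊆ H.verts)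
    (hadj : ∀ a, ∀ u ∈ (f a).1, ∀ v ∈ (f a).1, u ≠ v → H.Adj u v) :
    Nonempty (K ↪g triangleGraph H.coe) := by
  classical
  let ι : H.verts ↪ V := Function.Embedding.subtype _
  let lift (a : α) : Finset H.verts := (f a).1.subtype (· ∈ H.verts)
  have hmap (a : α) : (lift a).map ι = (f a).1 := subtype_map_of_mem (hverts a)
  have htri (a : α) : IsTriangle H.coe (lift a) := by
    refine ⟨by rw [← card_map ι, hmap, (f a).2.1], fun u hu v hv huv => ?_⟩
    rw [mem_subtype] at hu hv
    exact hadj a u hu v hv (Subtype.coe_injective.ne huv)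
  have hlift_inj : Function.Injective lift := fun a b h =>
    f.injective (Subtype.ext (by rw [← hmap, ← hmap, h]))
  have hadj_iff (a b : α) : (triangleGraph H.coe).Adj ⟨lift a, htri a⟩ ⟨lift b, htri b⟩ ↔
      (triangleGraph G).Adj (f a) (f b) := by
    have hinter : #(lift a ∩ lift b) = #((f a).1 ∩ (f b).1) := by
      rw [← card_map ι, map_inter, hmap, hmap]
    change (_ ≠ _ ∧ _) ↔ (_ ≠ _ ∧ _)
    rw [hinter, Ne, Ne, Subtype.mk.injEq, hlift_inj.eq_iff, f.injective.eq_iff]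
  exact ⟨⟨⟨fun a => ⟨lift a, htri a⟩, fun a b h => hlift_inj (congrArg Subtype.val h)⟩,
    fun {a b} => (hadj_iff a b).trans f.map_rel_iff⟩⟩

variable {n : ℕ} (hmin : MinimalForbiddenFor G n) (f : cycleGraph n ↪g triangleGraph G)
include hmin

theorem MinimalForbiddenFor.iSup_induce_eq_top :
    ⨆ i, (⊤ : G.Subgraph).induce ((f i).1 : Set V) = ⊤ := by
  by_contra hne
  refine (hmin.2 _ hne).false (nonempty_embedding_triangleGraph_coe _ f (fun i => ?_)
    (fun i u hu v hv huv => ?_)).some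
  · rw [Subgraph.verts_iSup]
    exact Set.subset_iUnion_of_subset i subset_rfl
  · rw [Subgraph.iSup_adj]
    exact ⟨i, by simpa [hu, hv] using (f i).2.2 u hu v hv huv⟩

theorem MinimalForbiddenFor.exists_mem_of_adj {u v : V} (huv : G.Adj u v) :
    ∃ i, u ∈ (f i).1 ∧ v ∈ (f i).1 := by
  rw [← Subgraph.top_adj, ← hmin.iSup_induce_eq_top f, Subgraph.iSup_adj] at huv
  obtain ⟨i, hu, hv, -⟩ := huv
  exact ⟨i, hu, hv⟩

theorem MinimalForbiddenFor.exists_mem (x : V) : ∃ i, x ∈ (f i).1 := by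
  have hx : x ∈ (⊤ : G.Subgraph).verts := trivial
  rw [← hmin.iSup_induce_eq_top f, Subgraph.verts_iSup, Set.mem_iUnion] at hx
  exact hx

end Minimality

section SharedEdge

variable {V : Type*} [DecidableEq V] {G : SimpleGraph V}

theorem Finset.exists_mem_iff_of_card_eq_three {t : Finset V} {u v : V} (ht : #t = 3)
    (hu : u ∈ t) (hv : v ∈ t) (huv : u ≠ v) :
    ∃ w, w ≠ u ∧ w ≠ v ∧ ∀ x, x ∈ t ↔ x = u ∨ x = v ∨ x = w := by
  have huvt : {u, v} ⊆ t := by simp [insert_subset_iff, hu, hv]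
  obtain ⟨w, hw⟩ : ∃ w, t \ {u, v} = {w} := card_eq_one.1 (by
    rw [card_sdiff_of_subset huvt, ht, card_pair huv])
  have hmem (x : V) : x ∈ t ↔ x ∈ ({u, v} : Finset V) ∨ x ∈ t \ {u, v} := by
    by_cases hx : x ∈ ({u, v} : Finset V)
    · simp [hx, huvt hx]
    · simp [hx]
  have hwuv : w ∉ ({u, v} : Finset V) := (mem_sdiff.1 (hw ▸ mem_singleton_self w)).2
  simp only [hw, mem_insert, mem_singleton, not_or] at hmem hwuv
  exact ⟨w, hwuv.1, hwuv.2, fun x => by rw [hmem, or_assoc]⟩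

theorem nonempty_iso_K5mK3_of_triangles_share_edge {T : Fin 3 → Finset V}
    (hT : ∀ i, IsTriangle G (T i)) (hinj : Function.Injective T) {u v : V} (huv : u ≠ v)
    (hspine : ∀ i, u ∈ T i ∧ v ∈ T i)
    (hverts : ∀ x, ∃ i, x ∈ T i) (hadj : ∀ x y, G.Adj x y → ∃ i, x ∈ T i ∧ y ∈ T i) :
    Nonempty (G ≃g K5mK3) := by
  choose a hau hav hmem using fun i =>
    exists_mem_iff_of_card_eq_three (hT i).1 (hspine i).1 (hspine i).2 huv
  have ha : Function.Injective a := fun i j h => hinj (by ext x; rw [hmem, hmem, h])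
  -- the tips `a i` of the three triangles span the deleted triangle `{0, 1, 2}` of `K₅ - K₃`
  let w : Fin 5 → V := ![a 0, a 1, a 2, u, v]
  have hw (x : Fin 5) (i : Fin 3) : w x ∈ T i ↔ (x : ℕ) = i ∨ 3 ≤ (x : ℕ) := by
    fin_cases x <;> fin_cases i <;> simp [w, hmem, ha.eq_iff, hau, hav]
  have hw_inj : Function.Injective w := by
    intro x y h
    fin_cases x <;> fin_cases y <;> simp_all [w, ha.eq_iff, (hau _).symm, (hav _).symm]
  have hw_surj : Function.Surjective w := by
    intro x
    obtain ⟨i, hi⟩ := hverts x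
    rcases (hmem i x).1 hi with rfl | rfl | rfl
    · exact ⟨3, rfl⟩
    · exact ⟨4, rfl⟩
    · fin_cases i
      exacts [⟨0, rfl⟩, ⟨1, rfl⟩, ⟨2, rfl⟩]
  have hG (x y : V) : G.Adj x y ↔ x ≠ y ∧ ∃ i, x ∈ T i ∧ y ∈ T i :=
    ⟨fun h => ⟨h.ne, hadj x y h⟩, fun ⟨hne, i, hx, hy⟩ => (hT i).2 x hx y hy hne⟩
  have hK (x y : Fin 5) : K5mK3.Adj x y ↔
      x ≠ y ∧ ∃ i : Fin 3, ((x : ℕ) = i ∨ 3 ≤ (x : ℕ)) ∧ ((y : ℕ) = i ∨ 3 ≤ (y : ℕ)) := by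
    change x ≠ y ∧ ¬((x : ℕ) < 3 ∧ (y : ℕ) < 3) ↔ _
    revert x y
    decide
  exact ⟨(RelIso.mk (Equiv.ofBijective w ⟨hw_inj, hw_surj⟩) fun {x y} => by
    change G.Adj (w x) (w y) ↔ _
    simp only [hG, hK, hw, hw_inj.ne_iff]).symm⟩

end SharedEdge

section Counting

variable {V : Type*} [DecidableEq V] {G : SimpleGraph V} {n : ℕ}

def cycleIndices (f : cycleGraph n ↪g triangleGraph G) (e : Sym2 V) : Finset (Fin n) :=
  {i | e ∈ (f i).1.sym2}

variable (f : cycleGraph n ↪g triangleGraph G)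

theorem mem_cycleIndices {e : Sym2 V} {i : Fin n} : i ∈ cycleIndices f e ↔ e ∈ (f i).1.sym2 := by
  simp [cycleIndices]

theorem coe_cycleIndices (e : Sym2 V) :
    (cycleIndices f e : Set (Fin n)) = {i | ∀ x ∈ e, x ∈ (f i).1} := by
  ext i
  simp [mem_cycleIndices, mem_sym2_iff]

theorem MinimalForbiddenFor.cycleIndices_nonempty (hmin : MinimalForbiddenFor G n) {e : Sym2 V}
    (he : e ∈ G.edgeSet) : (cycleIndices f e).Nonempty := by
  induction e using Sym2.ind with
  | _ u v =>
    obtain ⟨i, hu, hv⟩ := hmin.exists_mem_of_adj f he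
    exact ⟨i, (mem_cycleIndices f).2 (mk_mem_sym2_iff.2 ⟨hu, hv⟩)⟩

theorem MinimalForbiddenFor.card_cycleIndices_le_two (hmin : MinimalForbiddenFor G n)
    (hK5 : IsEmpty (G ≃g K5mK3)) {e : Sym2 V} (he : e ∈ G.edgeSet) : #(cycleIndices f e) ≤ 2 := by
  by_contra! h
  obtain ⟨i, hi, j, hj, k, hk, hij, hik, hjk⟩ := two_lt_card.1 h
  have hadj {a b : Fin n} (ha : a ∈ cycleIndices f e) (hb : b ∈ cycleIndices f e) (hab : a ≠ b) :
      (cycleGraph n).Adj a b :=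
    f.map_rel_iff.1 (triangleGraph_adj_of_mem_sym2 (f.injective.ne hab)
      (G.not_isDiag_of_mem_edgeSet he) ((mem_cycleIndices f).1 ha) ((mem_cycleIndices f).1 hb))
  obtain rfl := cycleGraph_eq_three_of_adj (hadj hi hj hij) (hadj hj hk hjk) (hadj hi hk hik)
  have hall : cycleIndices f e = univ := eq_univ_of_card _ (le_antisymm (card_le_univ _) h)
  induction e using Sym2.ind with
  | _ u v =>
    have hspine (i : Fin 3) : u ∈ (f i).1 ∧ v ∈ (f i).1 :=
      mk_mem_sym2_iff.1 ((mem_cycleIndices f).1 (hall ▸ mem_univ i))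
    exact hK5.false (nonempty_iso_K5mK3_of_triangles_share_edge (fun i => (f i).2)
      (Subtype.val_injective.comp f.injective) (G.ne_of_adj he) hspine (hmin.exists_mem f)
      fun x y => hmin.exists_mem_of_adj f).some

variable [Fintype V] [DecidableRel G.Adj]

theorem sum_card_cycleIndices : ∑ e ∈ G.edgeFinset, #(cycleIndices f e) = 3 * n := by
  calc ∑ e ∈ G.edgeFinset, #(cycleIndices f e)
      = ∑ i : Fin n, #{e ∈ G.edgeFinset | e ∈ (f i).1.sym2} :=
        sum_card_bipartiteAbove_eq_sum_card_bipartiteBelow (fun e i => e ∈ (f i).1.sym2)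
    _ = ∑ _i : Fin n, 3 := sum_congr rfl fun i _ => (f i).2.card_filter_edgeFinset_mem_sym2
    _ = 3 * n := by simp [mul_comm]

theorem sum_card_offDiag_cycleIndices (hn : 3 ≤ n) :
    ∑ e ∈ G.edgeFinset, #(cycleIndices f e).offDiag = 2 * n := by
  have hshared {i j : Fin n} (hij : i ≠ j) :
      #{e ∈ G.edgeFinset | e ∈ ((f i).1 ∩ (f j).1).sym2} =
        if (cycleGraph n).Adj i j then 1 else 0 := by
    have hle := (f i).2.card_inter_le_two (f j).2 (Subtype.coe_injective.ne (f.injective.ne hij))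
    have hadj : (cycleGraph n).Adj i j ↔ #((f i).1 ∩ (f j).1) = 2 :=
      f.map_rel_iff.symm.trans (and_iff_right (f.injective.ne hij))
    rw [((f i).2.isClique.subset (by simp)).card_filter_edgeFinset_mem_sym2]
    simp only [hadj]
    interval_cases #((f i).1 ∩ (f j).1) <;> rfl
  calc ∑ e ∈ G.edgeFinset, #(cycleIndices f e).offDiag
      = ∑ p ∈ (univ : Finset (Fin n)).offDiag,
          #{e ∈ G.edgeFinset | e ∈ ((f p.1).1 ∩ (f p.2).1).sym2} := by
        convert sum_card_bipartiteAbove_eq_sum_card_bipartiteBelow (s := G.edgeFinset)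
          (t := univ.offDiag) (fun e (p : Fin n × Fin n) => e ∈ (f p.1).1.sym2 ∧ e ∈ (f p.2).1.sym2)
          using 3 with e _ p _
        · ext ⟨i, j⟩
          simp only [bipartiteAbove, mem_filter, mem_offDiag, mem_univ, true_and, mem_cycleIndices]
          tauto
        · ext e
          simp [bipartiteBelow, mem_sym2_iff, forall_and]
    _ = ∑ p ∈ (univ : Finset (Fin n)).offDiag, if (cycleGraph n).Adj p.1 p.2 then 1 else 0 :=
        sum_congr rfl fun p hp => hshared (mem_offDiag.1 hp).2.2
    _ = ∑ i, (cycleGraph n).degree i := by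
        rw [sum_subset (subset_univ _) fun p _ hp => if_neg fun h => h.ne (by simpa using hp),
          Fintype.sum_prod_type]
        exact sum_congr rfl fun i _ => (degree_eq_sum_if_adj _ i).symm
    _ = 2 * n := by
        obtain ⟨m, rfl⟩ : ∃ m, n = m + 3 := ⟨n - 3, by omega⟩
        simp [cycleGraph_degree_three_le, mul_comm]

end Counting

theorem card_sum_of_forall_eq_one_or_two {ι : Type*} {s : Finset ι} {m : ι → ℕ}
    (hm : ∀ x ∈ s, m x = 1 ∨ m x = 2) :
    #s = #{x ∈ s | m x = 1} + #{x ∈ s | m x = 2} ∧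
      ∑ x ∈ s, m x = #{x ∈ s | m x = 1} + 2 * #{x ∈ s | m x = 2} ∧
      ∑ x ∈ s, (m x * m x - m x) = 2 * #{x ∈ s | m x = 2} := by
  simp only [card_filter]
  rw [card_eq_sum_ones]
  simp only [mul_sum, ← sum_add_distrib]
  refine ⟨sum_congr rfl ?_, sum_congr rfl ?_, sum_congr rfl ?_⟩ <;>
  · intro x hx
    rcases hm x hx with h | h <;> simp [h]

/-- If `G` is minimal forbidden for `Cₙ` and not `K₅ - K₃`, then for any fixed
induced `n`-cycle of `T(G)`, no edge of `G` lies in more than two cycle-triangles,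
`G` has exactly `2n` edges, of which exactly `n` lie in exactly one cycle-triangle
and exactly `n` in exactly two. -/
theorem minimal_forbidden_structure {V : Type*} [Fintype V] [DecidableEq V]
    (G : SimpleGraph V) (n : ℕ) (hn : 3 ≤ n)
    (hK5 : IsEmpty (G ≃g K5mK3))
    (hmin : MinimalForbiddenFor G n)
    (f : cycleGraph n ↪g triangleGraph G) :
    (∀ u v : V, G.Adj u v →
        {i : Fin n | u ∈ (f i).1 ∧ v ∈ (f i).1}.ncard ≤ 2) ∧
    G.edgeSet.ncard = 2 * n ∧
    {e : Sym2 V | e ∈ G.edgeSet ∧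
        {i : Fin n | ∀ x ∈ e, x ∈ (f i).1}.ncard = 1}.ncard = n ∧
    {e : Sym2 V | e ∈ G.edgeSet ∧
        {i : Fin n | ∀ x ∈ e, x ∈ (f i).1}.ncard = 2}.ncard = n := by
  classical
  have hmult {e : Sym2 V} (he : e ∈ G.edgeSet) :
      #(cycleIndices f e) = 1 ∨ #(cycleIndices f e) = 2 := by
    have := (hmin.cycleIndices_nonempty f he).card_pos
    have := hmin.card_cycleIndices_le_two f hK5 he
    omega
  obtain ⟨hcard, hsum, hsum_offDiag⟩ :=
    card_sum_of_forall_eq_one_or_two fun e he => hmult (mem_edgeFinset.1 he)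
  rw [sum_card_cycleIndices] at hsum
  simp only [← offDiag_card, sum_card_offDiag_cycleIndices f hn] at hsum_offDiag
  have hedges (k : ℕ) : {e | e ∈ G.edgeSet ∧ {i | ∀ x ∈ e, x ∈ (f i).1}.ncard = k}.ncard =
      #{e ∈ G.edgeFinset | #(cycleIndices f e) = k} := by
    rw [← Set.ncard_coe_finset]
    simp [← coe_cycleIndices]
  refine ⟨fun u v huv => ?_, ?_, by rw [hedges]; omega, by rw [hedges]; omega⟩
  · have h := coe_cycleIndices f s(u, v)
    simp only [Sym2.mem_iff, forall_eq_or_imp, forall_eq] at h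
    rw [← h, Set.ncard_coe_finset]
    exact hmin.card_cycleIndices_le_two f hK5 (G.mem_edgeSet.2 huv)
  · rw [← coe_edgeFinset, Set.ncard_coe_finset]
    omega
end

section
/- If the triangle graph T(G) of a finite graph G is a perfect graph, then τ_Δ(G) ≤ 2·ν_Δ(G), where ν_Δ(G) is the maximum number of pairwise edge-disjoint triangles in G and τ_Δ(G) is the minimum size of an edge set meeting every triangle of G. -/
/-!
Lovász's replication lemma says that blowing the vertices of a perfect graph up into cliques keeps
it perfect. Weighting each vertex of `T(G)` by the number of maximum independent sets containing it
then shows that some clique of `T(G)` meets all of them; removing that clique and inducting covers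
`T(G)` by `α(T(G)) ≤ ν_Δ(G)` cliques. The triangles of a clique of `T(G)` either share an edge or
lie in a `K₄`, so two edges of `G` meet all of them, giving a triangle transversal of size at most
`2 ν_Δ(G)`.
-/

open SimpleGraph

/-- A graph is perfect if every induced subgraph has chromatic number equal to its
clique number. -/
def IsPerfect {α : Type*} (H : SimpleGraph α) : Prop :=
  ∀ s : Set α, (H.induce s).chromaticNumber = ((H.induce s).cliqueNum : ℕ∞)

/-- `ν_Δ(G)`: the maximum number of pairwise edge-disjoint triangles in `G`. -/
noncomputable def triPackingNumber {V : Type*} [DecidableEq V] (G : SimpleGraph V) : ℕ :=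
  sSup {k : ℕ | ∃ S : Finset (Finset V), S.card = k ∧ (∀ t ∈ S, IsTriangle G t) ∧
    ∀ t ∈ S, ∀ s ∈ S, t ≠ s → (t ∩ s).card ≤ 1}

/-- `τ_Δ(G)`: the minimum size of an edge set meeting every triangle of `G`. -/
noncomputable def triTransversalNumber {V : Type*} [DecidableEq V] (G : SimpleGraph V) : ℕ :=
  sInf {k : ℕ | ∃ E' : Finset (Sym2 V), E'.card = k ∧ (∀ e ∈ E', e ∈ G.edgeSet) ∧
    ∀ t : Finset V, IsTriangle G t → ∃ e ∈ E', ∀ x ∈ e, x ∈ t}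

open Finset

namespace Finset

variable {α : Type*} [DecidableEq α]

theorem sum_card_filter_mem_eq_sum_card_inter {ι : Type*} (Q : Finset α)
    (T : Finset ι) (F : ι → Finset α) :
    ∑ v ∈ Q, #{i ∈ T | v ∈ F i} = ∑ i ∈ T, #(Q ∩ F i) := by
  simp only [card_filter, ← filter_mem_eq_inter]
  exact sum_comm

theorem sum_sub_ite_add_card_inter {w : α → ℕ} {A : Finset α}
    (hA : ∀ v ∈ A, 1 ≤ w v) (Q : Finset α) :
    ∑ v ∈ Q, (w v - if v ∈ A then 1 else 0) + #(Q ∩ A) = ∑ v ∈ Q, w v := by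
  rw [← filter_mem_eq_inter, card_filter, ← sum_add_distrib]
  refine sum_congr rfl fun v _ => ?_
  split_ifs with hv
  · have := hA v hv; omega
  · rfl

theorem erase_subset_of_card_le_card_inter_add_one {s t : Finset α} {x : α} (hxt : x ∈ t)
    (hxs : x ∉ s) (h : #t ≤ #(s ∩ t) + 1) : t.erase x ⊆ s := by
  have hsub : s ∩ t ⊆ t.erase x := fun y hy =>
    mem_erase.2 ⟨fun hyx => hxs (hyx ▸ (mem_inter.1 hy).1), (mem_inter.1 hy).2⟩
  have heq := eq_of_subset_of_card_le hsub (by rw [card_erase_of_mem hxt]; omega)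
  exact heq ▸ inter_subset_left

end Finset

namespace SimpleGraph

variable {α : Type*} [DecidableEq α] {H : SimpleGraph α}

theorem IsClique.card_inter_le_one {Q A : Finset α} (hQ : H.IsClique (Q : Set α))
    (hA : H.IsIndepSet (A : Set α)) : #(Q ∩ A) ≤ 1 := by
  refine Finset.card_le_one.2 fun x hx y hy => ?_
  simp only [mem_inter] at hx hy
  by_contra hxy
  exact hA hx.2 hy.2 hxy (hQ hx.1 hy.1 hxy)

theorem IsClique.sum_card_inter_lt {ι : Type*} {Q : Finset α} {T : Finset ι}
    {F : ι → Finset α} (hQ : H.IsClique (Q : Set α)) (hF : ∀ i ∈ T, H.IsIndepSet (F i : Set α))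
    {i : ι} (hi : i ∈ T) (hQi : Q ∩ F i = ∅) : ∑ j ∈ T, #(Q ∩ F j) < #T := by
  classical
  rw [← add_sum_erase T _ hi, hQi, card_empty, zero_add]
  calc ∑ j ∈ T.erase i, #(Q ∩ F j) ≤ #(T.erase i) * 1 :=
        sum_le_card_nsmul _ _ _ fun j hj => hQ.card_inter_le_one (hF j (mem_of_mem_erase hj))
    _ < #T := by rw [mul_one]; exact card_erase_lt_of_mem hi

/-- `I` is a proper `k`-colouring of the graph obtained from `H` by blowing each vertex `v` up
into a clique of size `w v`, recorded by its colour classes projected back to `H`. -/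
def IsWeightedColoring (H : SimpleGraph α) (w : α → ℕ) {k : ℕ} (I : Fin k → Finset α) : Prop :=
  (∀ i, H.IsIndepSet (I i : Set α)) ∧ ∀ v, #{i | v ∈ I i} = w v

namespace IsWeightedColoring

variable {w : α → ℕ} {k : ℕ} {I : Fin k → Finset α}

theorem pos_of_mem (hI : H.IsWeightedColoring w I) {i : Fin k} {v : α} (hv : v ∈ I i) :
    0 < w v := by
  rw [← hI.2 v]
  exact card_pos.2 ⟨i, mem_filter.2 ⟨mem_univ i, hv⟩⟩

theorem sum_eq (hI : H.IsWeightedColoring w I) (Q : Finset α) :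
    ∑ v ∈ Q, w v = ∑ i, #(Q ∩ I i) := by
  simp only [← hI.2, sum_card_filter_mem_eq_sum_card_inter]

theorem inter_nonempty (hI : H.IsWeightedColoring w I) {Q : Finset α}
    (hQ : H.IsClique (Q : Set α)) (hQw : ∑ v ∈ Q, w v = k) (i : Fin k) : (Q ∩ I i).Nonempty := by
  rw [nonempty_iff_ne_empty]
  intro hQi
  have := hQ.sum_card_inter_lt (fun j _ => hI.1 j) (mem_univ i) hQi
  rw [← hI.sum_eq, hQw, card_univ, Fintype.card_fin] at this
  exact this.false

theorem cons (hI : H.IsWeightedColoring w I) {A : Finset α} (hA : H.IsIndepSet (A : Set α)) :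
    H.IsWeightedColoring (fun v => w v + if v ∈ A then 1 else 0)
      (Fin.cons A I : Fin (k + 1) → Finset α) := by
  refine ⟨Fin.cases hA hI.1, fun v => ?_⟩
  simp only [card_filter, Fin.sum_univ_succ, Fin.cons_zero, Fin.cons_succ, ← hI.2 v]
  omega

end IsWeightedColoring

end SimpleGraph

section Perfect

variable {α : Type*} [Fintype α] [DecidableEq α] {H : SimpleGraph α}

theorem IsPerfect.exists_isWeightedColoring_of_le_one (hH : IsPerfect H) {w : α → ℕ}
    (hw : ∀ v, w v ≤ 1) {k : ℕ} (hk : ∀ Q : Finset α, H.IsClique (Q : Set α) → ∑ v ∈ Q, w v ≤ k) :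
    ∃ I : Fin k → Finset α, H.IsWeightedColoring w I := by
  set s : Set α := {v | w v = 1}
  have hclique : (H.induce s).cliqueNum ≤ k := by
    obtain ⟨t, ht⟩ := (H.induce s).exists_isNClique_cliqueNum
    rw [isNClique_induce_iff] at ht
    calc (H.induce s).cliqueNum = ∑ v ∈ t.map (.subtype _), w v := by
          rw [sum_map, ← ht.card_eq, card_map, card_eq_sum_ones]
          exact sum_congr rfl fun v _ => v.2.symm
      _ ≤ k := hk _ ht.isClique
  obtain ⟨C⟩ : (H.induce s).Colorable k :=
    chromaticNumber_le_iff_colorable.1 (hH s ▸ Nat.cast_le.2 hclique)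
  refine ⟨fun i => {v | ∃ hv : v ∈ s, C ⟨v, hv⟩ = i}, fun i => ?_, fun v => ?_⟩
  · intro u hu v hv huv hadj
    simp only [coe_filter, mem_univ, true_and] at hu hv
    obtain ⟨hu, rfl⟩ := hu
    obtain ⟨hv, hcol⟩ := hv
    exact C.valid (show (H.induce s).Adj ⟨u, hu⟩ ⟨v, hv⟩ from hadj) hcol.symm
  · by_cases hv : v ∈ s
    · simp [hv, filter_eq, show w v = 1 from hv]
    · have hv_ne : w v ≠ 1 := hv
      have hv_le := hw v
      simp only [mem_filter, mem_univ, hv, IsEmpty.exists_iff, and_false, filter_false,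
        card_empty]
      omega

/-- Lovász's replication lemma, in weighted form. -/
theorem IsPerfect.exists_isWeightedColoring (hH : IsPerfect H) (w : α → ℕ) (k : ℕ)
    (hk : ∀ Q : Finset α, H.IsClique (Q : Set α) → ∑ v ∈ Q, w v ≤ k) :
    ∃ I : Fin k → Finset α, H.IsWeightedColoring w I := by
  induction hn : ∑ v, w v using Nat.strong_induction_on generalizing w k with
  | _ n ih =>
  by_cases hw : ∀ v, w v ≤ 1
  · exact hH.exists_isWeightedColoring_of_le_one hw hk
  obtain ⟨v₀, hv₀⟩ := not_forall.1 hw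
  -- Colour `w` minus one copy of `v₀` with classes `I`. Every clique of weight `k` then meets the
  -- class `I i₀` of `v₀`, so `w` minus `I i₀` needs one colour fewer, and `I i₀` is added back.
  set w' : α → ℕ := fun v => w v - if v ∈ ({v₀} : Finset α) then 1 else 0
  have hw' (Q : Finset α) : ∑ v ∈ Q, w' v + #(Q ∩ {v₀}) = ∑ v ∈ Q, w v :=
    sum_sub_ite_add_card_inter (fun v hv => by rw [mem_singleton.1 hv]; omega) Q
  obtain ⟨I, hI⟩ := ih (∑ v, w' v) (by rw [← hn, ← hw' univ, univ_inter, card_singleton]; omega)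
    w' k (fun Q hQ => (le_self_add.trans (hw' Q).le).trans (hk Q hQ)) rfl
  obtain ⟨i₀, hi₀⟩ : ∃ i, v₀ ∈ I i := by
    have hpos : 0 < #{i | v₀ ∈ I i} := by
      rw [hI.2]
      simp only [mem_singleton, ↓reduceIte, tsub_pos_iff_lt, w']
      omega
    obtain ⟨i, hi⟩ := card_pos.1 hpos
    exact ⟨i, (mem_filter.1 hi).2⟩
  obtain ⟨k, rfl⟩ : ∃ k', k = k' + 1 := Nat.exists_eq_add_one.2 (Fin.pos i₀)
  set w'' : α → ℕ := fun v => w v - if v ∈ I i₀ then 1 else 0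
  have hw'' (Q : Finset α) : ∑ v ∈ Q, w'' v + #(Q ∩ I i₀) = ∑ v ∈ Q, w v :=
    sum_sub_ite_add_card_inter (fun v hv => (hI.pos_of_mem hv).trans_le (Nat.sub_le _ _)) Q
  have hmeet (Q : Finset α) (hQ : H.IsClique (Q : Set α)) :
      ∑ v ∈ Q, w v ≤ k ∨ (Q ∩ I i₀).Nonempty := by
    by_contra! h
    have hv₀Q : Q ∩ {v₀} = ∅ := by
      rw [inter_singleton_of_notMem fun hv₀ => notMem_empty v₀ (h.2 ▸ mem_inter.2 ⟨hv₀, hi₀⟩)]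
    have := hw' Q
    rw [hv₀Q, card_empty, add_zero] at this
    have := hI.inter_nonempty hQ (by have := hk Q hQ; omega) i₀
    exact not_nonempty_iff_eq_empty.2 h.2 this
  obtain ⟨J, hJ⟩ := ih (∑ v, w'' v)
    (by rw [← hn, ← hw'' univ, univ_inter]; have := card_pos.2 ⟨v₀, hi₀⟩; omega) w'' k
    (fun Q hQ => by
      have := hw'' Q
      rcases hmeet Q hQ with h | h
      · omega
      · have := card_pos.2 h; have := hk Q hQ; omega) rfl
  refine ⟨Fin.cons (I i₀) J, ?_⟩
  convert hJ.cons (hI.1 i₀) using 1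
  funext v
  split_ifs with hv
  · have := (hI.pos_of_mem hv).trans_le (Nat.sub_le _ _); simp only [w'', if_pos hv]; omega
  · simp only [w'', if_neg hv]; omega

theorem IsPerfect.exists_isClique_forall_inter_nonempty (hH : IsPerfect H) {U : Finset α} {m : ℕ}
    (hU : ∀ A : Finset α, A ⊆ U → H.IsIndepSet (A : Set α) → #A ≤ m + 1) :
    ∃ Q : Finset α, H.IsClique (Q : Set α) ∧
      ∀ A : Finset α, A ⊆ U → H.IsIndepSet (A : Set α) → #A = m + 1 → (Q ∩ A).Nonempty := by
  classical
  by_contra! h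
  -- Weight each vertex by the number of maximum independent sets containing it: every clique
  -- misses one of them, so the weighted colouring uses fewer colours than there are such sets.
  set 𝒜 := U.powerset.filter fun A : Finset α => H.IsIndepSet (A : Set α) ∧ #A = m + 1
  have mem_𝒜 {A : Finset α} : A ∈ 𝒜 ↔ A ⊆ U ∧ H.IsIndepSet (A : Set α) ∧ #A = m + 1 := by
    simp only [𝒜, mem_filter, mem_powerset]
  set w : α → ℕ := fun v => #{A ∈ 𝒜 | v ∈ A}
  have hw (Q : Finset α) : ∑ v ∈ Q, w v = ∑ A ∈ 𝒜, #(Q ∩ A) :=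
    sum_card_filter_mem_eq_sum_card_inter Q 𝒜 id
  obtain ⟨I, hI⟩ := hH.exists_isWeightedColoring w (#𝒜 - 1) fun Q hQ => by
    obtain ⟨A, hAU, hA, hAm, hQA⟩ := h Q hQ
    have := hQ.sum_card_inter_lt (fun A hA => (mem_𝒜.1 hA).2.1) (mem_𝒜.2 ⟨hAU, hA, hAm⟩) hQA
    rw [hw]
    omega
  have hIU (i : Fin (#𝒜 - 1)) : I i ⊆ U := fun v hv => by
    obtain ⟨A, hA⟩ := card_pos.1 (hI.pos_of_mem hv)
    exact (mem_𝒜.1 (mem_filter.1 hA).1).1 (mem_filter.1 hA).2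
  have h𝒜 : 0 < #𝒜 := by
    obtain ⟨A, hAU, hA, hAm, -⟩ := h ∅ (by simp)
    exact card_pos.2 ⟨A, mem_𝒜.2 ⟨hAU, hA, hAm⟩⟩
  have hlower : ∑ v, w v = #𝒜 * (m + 1) := by
    rw [hw, ← smul_eq_mul, ← sum_const]
    exact sum_congr rfl fun A hA => by rw [univ_inter, (mem_𝒜.1 hA).2.2]
  have hupper : ∑ v, w v ≤ (#𝒜 - 1) * (m + 1) := by
    rw [hI.sum_eq]
    simpa only [univ_inter, card_univ, Fintype.card_fin, smul_eq_mul] using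
      sum_le_card_nsmul univ _ _ fun i _ => hU (I i) (hIU i) (hI.1 i)
  have := Nat.le_of_mul_le_mul_right (hlower ▸ hupper) m.succ_pos
  omega

theorem IsPerfect.exists_cliqueCover (hH : IsPerfect H) (m : ℕ) (U : Finset α)
    (hU : ∀ A : Finset α, A ⊆ U → H.IsIndepSet (A : Set α) → #A ≤ m) :
    ∃ F : Finset (Finset α), #F ≤ m ∧ (∀ Q ∈ F, H.IsClique (Q : Set α)) ∧
      ∀ v ∈ U, ∃ Q ∈ F, v ∈ Q := by
  induction m generalizing U with
  | zero =>
    refine ⟨∅, card_empty.le, by simp, fun v hv => ?_⟩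
    simpa using hU {v} (singleton_subset_iff.2 hv) (by simp)
  | succ m ih =>
    obtain ⟨Q, hQ, hQU⟩ := hH.exists_isClique_forall_inter_nonempty hU
    obtain ⟨F, hF, hFQ, hFU⟩ := ih (U \ Q) fun A hA hAi => by
      have hQA : ¬(Q ∩ A).Nonempty := fun ⟨v, hv⟩ =>
        (mem_sdiff.1 (hA (mem_inter.1 hv).2)).2 (mem_inter.1 hv).1
      have := hU A (hA.trans sdiff_subset) hAi
      have := mt (hQU A (hA.trans sdiff_subset) hAi) hQA
      omega
    refine ⟨insert Q F, (card_insert_le Q F).trans (by omega), ?_, fun v hv => ?_⟩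
    · simpa only [mem_insert, forall_eq_or_imp] using ⟨hQ, hFQ⟩
    by_cases hvQ : v ∈ Q
    · exact ⟨Q, mem_insert_self Q F, hvQ⟩
    · obtain ⟨Q', hQ', hvQ'⟩ := hFU v (mem_sdiff.2 ⟨hv, hvQ⟩)
      exact ⟨Q', mem_insert_of_mem hQ', hvQ'⟩

end Perfect

section TriangleGraph

variable {V : Type*} [DecidableEq V] {G : SimpleGraph V}

theorem two_le_card_inter_of_isClique {Q : Finset {t // IsTriangle G t}}
    (hQ : (triangleGraph G).IsClique (Q : Set {t // IsTriangle G t})) {p q : {t // IsTriangle G t}}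
    (hp : p ∈ Q) (hq : q ∈ Q) : 2 ≤ #(p.1 ∩ q.1) := by
  by_cases hpq : p = q
  · rw [hpq, inter_self, q.2.1]; omega
  · exact (hQ hp hq hpq).2.ge

theorem card_inter_le_one_of_not_adj {p q : {t // IsTriangle G t}} (hpq : p ≠ q)
    (h : ¬(triangleGraph G).Adj p q) : #(p.1 ∩ q.1) ≤ 1 := by
  have h2 : #(p.1 ∩ q.1) ≠ 2 := fun h2 => h ⟨hpq, h2⟩
  have h3 : #(p.1 ∩ q.1) ≠ 3 := fun h3 => hpq <| Subtype.ext <|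
    (eq_of_subset_of_card_le inter_subset_left (by rw [h3, p.2.1])).symm.trans
      (eq_of_subset_of_card_le inter_subset_right (by rw [h3, q.2.1]))
  have := (card_le_card (inter_subset_left (s₁ := p.1) (s₂ := q.1))).trans_eq p.2.1
  omega

theorem exists_adj_adj_cover_of_isClique {Q : Finset {t // IsTriangle G t}}
    (hQ : (triangleGraph G).IsClique (Q : Set {t // IsTriangle G t})) (hQne : Q.Nonempty) :
    ∃ a b c d, G.Adj a b ∧ G.Adj c d ∧ ∀ p ∈ Q, (a ∈ p.1 ∧ b ∈ p.1) ∨ (c ∈ p.1 ∧ d ∈ p.1) := by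
  obtain ⟨p₁, hp₁⟩ := hQne
  by_cases hsingle : ∀ p ∈ Q, p = p₁
  · obtain ⟨a, ha, b, hb, hab⟩ := one_lt_card.1 (by rw [p₁.2.1]; omega : 1 < #p₁.1)
    have hadj := p₁.2.2 a ha b hb hab
    exact ⟨a, b, a, b, hadj, hadj, fun p hp => Or.inl (hsingle p hp ▸ ⟨ha, hb⟩)⟩
  obtain ⟨p₂, hp₂, hp₂₁⟩ := not_forall₂.1 hsingle
  obtain ⟨a, b, hab, hI⟩ := card_eq_two.1 (hQ hp₁ hp₂ (Ne.symm hp₂₁)).2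
  have ha : a ∈ p₁.1 ∩ p₂.1 := hI ▸ mem_insert_self a {b}
  have hb : b ∈ p₁.1 ∩ p₂.1 := hI ▸ mem_insert_of_mem (mem_singleton_self b)
  have hadj := p₁.2.2 a (mem_inter.1 ha).1 b (mem_inter.1 hb).1 hab
  obtain ⟨c, hc⟩ : (p₁.1 \ p₂.1).Nonempty := by
    rw [← card_pos, card_sdiff, inter_comm, hI, p₁.2.1, card_pair hab]; omega
  obtain ⟨d, hd⟩ : (p₂.1 \ p₁.1).Nonempty := by
    rw [← card_pos, card_sdiff, hI, p₂.2.1, card_pair hab]; omega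
  rw [mem_sdiff] at hc hd
  -- A triangle of `Q` missing `a` or `b` shares an edge with both `abc` and `abd`, so it is `xcd`.
  have hcover (p) (hp : p ∈ Q) : (a ∈ p.1 ∧ b ∈ p.1) ∨ (c ∈ p.1 ∧ d ∈ p.1) := by
    refine or_iff_not_imp_left.2 fun hnab => ?_
    obtain ⟨x, hx, hxp⟩ : ∃ x ∈ p₁.1 ∩ p₂.1, x ∉ p.1 := by
      rw [hI]; simpa [imp_iff_not_or] using hnab
    rw [mem_inter] at hx
    have hle (q) (hq : q ∈ Q) : #q.1 ≤ #(p.1 ∩ q.1) + 1 := by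
      have := two_le_card_inter_of_isClique hQ hp hq
      rw [q.2.1]
      omega
    exact ⟨erase_subset_of_card_le_card_inter_add_one hx.1 hxp (hle p₁ hp₁)
        (mem_erase.2 ⟨(ne_of_mem_of_not_mem hx.2 hc.2).symm, hc.1⟩),
      erase_subset_of_card_le_card_inter_add_one hx.2 hxp (hle p₂ hp₂)
        (mem_erase.2 ⟨(ne_of_mem_of_not_mem hx.1 hd.2).symm, hd.1⟩)⟩
  by_cases hab_all : ∀ p ∈ Q, a ∈ p.1 ∧ b ∈ p.1
  · exact ⟨a, b, a, b, hadj, hadj, fun p hp => Or.inl (hab_all p hp)⟩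
  obtain ⟨p₃, hp₃, hp₃ab⟩ := not_forall₂.1 hab_all
  have hcd := (hcover p₃ hp₃).resolve_left hp₃ab
  exact ⟨a, b, c, d, hadj, p₃.2.2 c hcd.1 d hcd.2 (ne_of_mem_of_not_mem hd.1 hc.2).symm, hcover⟩

theorem exists_edges_cover_of_isClique {Q : Finset {t // IsTriangle G t}}
    (hQ : (triangleGraph G).IsClique (Q : Set {t // IsTriangle G t})) :
    ∃ E : Finset (Sym2 V), #E ≤ 2 ∧ (∀ e ∈ E, e ∈ G.edgeSet) ∧
      ∀ p ∈ Q, ∃ e ∈ E, ∀ x ∈ e, x ∈ p.1 := by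
  rcases Q.eq_empty_or_nonempty with rfl | hQne
  · exact ⟨∅, by simp, by simp, by simp⟩
  obtain ⟨a, b, c, d, hab, hcd, hQ⟩ := exists_adj_adj_cover_of_isClique hQ hQne
  refine ⟨{s(a, b), s(c, d)}, card_le_two, ?_, fun p hp => ?_⟩
  · simpa using ⟨hab, hcd⟩
  · rcases hQ p hp with h | h
    · exact ⟨s(a, b), by simp, by simpa using h⟩
    · exact ⟨s(c, d), by simp, by simpa using h⟩

theorem triTransversalNumber_le_card {E : Finset (Sym2 V)} (hE : ∀ e ∈ E, e ∈ G.edgeSet)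
    (hcover : ∀ t : Finset V, IsTriangle G t → ∃ e ∈ E, ∀ x ∈ e, x ∈ t) :
    triTransversalNumber G ≤ #E :=
  Nat.sInf_le ⟨E, rfl, hE, hcover⟩

variable [Fintype V]

theorem card_le_triPackingNumber {A : Finset {t // IsTriangle G t}}
    (hA : (triangleGraph G).IsIndepSet (A : Set {t // IsTriangle G t})) :
    #A ≤ triPackingNumber G := by
  refine le_csSup ⟨Fintype.card (Finset V), fun k ⟨S, hS, _⟩ => hS ▸ card_le_univ S⟩
    ⟨A.map (.subtype _), card_map _, fun t ht => ?_, ?_⟩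
  · obtain ⟨p, -, rfl⟩ := mem_map.1 ht
    exact p.2
  simp only [mem_map, Function.Embedding.subtype_apply]
  rintro _ ⟨p, hp, rfl⟩ _ ⟨q, hq, rfl⟩ hpq
  have hpq : p ≠ q := fun h => hpq (h ▸ rfl)
  exact card_inter_le_one_of_not_adj hpq (hA hp hq hpq)

end TriangleGraph

/-- Tuza's conjecture holds for graphs whose triangle graph is perfect:
`τ_Δ(G) ≤ 2 ν_Δ(G)`. -/
theorem tuza_of_perfect_triangleGraph {V : Type*} [Fintype V] [DecidableEq V]
    (G : SimpleGraph V) (hperf : IsPerfect (triangleGraph G)) :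
    triTransversalNumber G ≤ 2 * triPackingNumber G := by
  have : Fintype {t // IsTriangle G t} := Fintype.ofFinite _
  obtain ⟨F, hF, hFclique, hFcover⟩ := hperf.exists_cliqueCover (triPackingNumber G) univ
    fun A _ hA => card_le_triPackingNumber hA
  choose! E hEcard hEedges hEcover using fun Q hQ => exists_edges_cover_of_isClique (hFclique Q hQ)
  calc triTransversalNumber G ≤ #(F.biUnion E) := by
        refine triTransversalNumber_le_card (fun e he => ?_) fun t ht => ?_
        · obtain ⟨Q, hQ, heQ⟩ := mem_biUnion.1 he
          exact hEedges Q hQ e heQ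
        obtain ⟨Q, hQ, htQ⟩ := hFcover ⟨t, ht⟩ (mem_univ _)
        obtain ⟨e, he, hte⟩ := hEcover Q hQ _ htQ
        exact ⟨e, mem_biUnion.2 ⟨Q, hQ, he⟩, hte⟩
    _ ≤ ∑ Q ∈ F, #(E Q) := card_biUnion_le
    _ ≤ ∑ _Q ∈ F, 2 := sum_le_sum hEcard
    _ ≤ 2 * triPackingNumber G := by rw [sum_const, smul_eq_mul]; omega
end
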